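/- arXiv:2109.07363 — 2 statements merged into one kernel-verified Lean document; each statement's English description precedes it below -/
import Mathlib

section
/- Let ω be a weight on ℝ with log ω ∈ BMO(ℝ). Then log ω ∈ VMO(ℝ) if and only if lim_{δ→0} sup_{|I|<δ} ((1/|I|)∫_I ω(x) dx)·exp(−(1/|I|)∫_I log ω(x) dx) = 1, where the supremum is over bounded intervals I ⊂ ℝ. -/
open MeasureTheory intervalIntegral

/-- The average of `u` over the interval `(a, b)`. -/
noncomputable def intervalAvg (u : ℝ → ℝ) (a b : ℝ) : ℝ :=
  (1 / (b - a)) * ∫ x in a..b, u x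

/-- The mean oscillation of `u` over the interval `(a, b)`. -/
noncomputable def meanOsc (u : ℝ → ℝ) (a b : ℝ) : ℝ :=
  (1 / (b - a)) * ∫ x in a..b, |u x - intervalAvg u a b|

/-!
Write `u = log ω`, fix an interval `I` and put `v = u - u_I`; the reverse Jensen quantity is
`⨍_I e^v`, and `⨍_I v = 0`.

If `⨍_I e^v` is close to `1`, the mean oscillation is small because
`|v| + v ≤ θ + 2 (e^v - 1 - v) / θ` pointwise, so `⨍_I |v| ≤ θ + 2 (⨍_I e^v - 1) / θ`.

Conversely, if the mean oscillation is at most `t²` on all intervals shorter than `δ`, a local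
John–Nirenberg argument gives `⨍_I e^v ≤ 1 + 4t`. Stop the dyadic subdivision of `I` at the
maximal intervals whose average exceeds `u_I + t`. Off them `u ≤ u_I + t` a.e. (Lebesgue
differentiation), where `e^v ≤ 1 + v + 2|v|`; they have total length at most `t |I|`, and since
their parents were not stopped their averages are at most `u_I + t + 2t²`. For the truncations
`min (e^v) m`, whose supremum `S` over short intervals is finite, this yields
`S ≤ 1 + 2t² + e^{t + 2t²} t S`, hence `S ≤ 1 + 4t`; finally let `m → ∞`.
-/

open Set Filter Real Topology

section IntervalAvg

variable {u v : ℝ → ℝ} {c d : ℝ}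

lemma intervalAvg_eq_inv_mul (h : c ≤ d) (u : ℝ → ℝ) :
    intervalAvg u c d = (d - c)⁻¹ * ∫ x in Ioc c d, u x := by
  rw [intervalAvg, intervalIntegral.integral_of_le h, one_div]

lemma integral_Ioc_eq_mul_intervalAvg (h : c < d) (u : ℝ → ℝ) :
    ∫ x in Ioc c d, u x = (d - c) * intervalAvg u c d := by
  rw [intervalAvg_eq_inv_mul h.le, mul_inv_cancel_left₀ (sub_pos.2 h).ne']

lemma integral_Ioc_abs_sub_eq_mul_meanOsc (h : c < d) (u : ℝ → ℝ) :
    ∫ x in Ioc c d, |u x - intervalAvg u c d| = (d - c) * meanOsc u c d :=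
  integral_Ioc_eq_mul_intervalAvg h _

lemma intervalAvg_const (h : c ≠ d) (k : ℝ) : intervalAvg (fun _ => k) c d = k := by
  rw [intervalAvg, intervalIntegral.integral_const, smul_eq_mul, ← mul_assoc,
    one_div_mul_cancel (sub_ne_zero.2 h.symm), one_mul]

lemma intervalAvg_const_mul (k : ℝ) (u : ℝ → ℝ) (c d : ℝ) :
    intervalAvg (fun x => k * u x) c d = k * intervalAvg u c d := by
  rw [intervalAvg, intervalIntegral.integral_const_mul, intervalAvg, mul_left_comm]

lemma intervalAvg_mul_const (k : ℝ) (u : ℝ → ℝ) (c d : ℝ) :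
    intervalAvg (fun x => u x * k) c d = intervalAvg u c d * k := by
  simpa only [mul_comm _ k] using intervalAvg_const_mul k u c d

lemma intervalAvg_add (h : c ≤ d) (hu : IntegrableOn u (Ioc c d))
    (hv : IntegrableOn v (Ioc c d)) :
    intervalAvg (fun x => u x + v x) c d = intervalAvg u c d + intervalAvg v c d := by
  rw [intervalAvg_eq_inv_mul h, intervalAvg_eq_inv_mul h, intervalAvg_eq_inv_mul h,
    integral_add hu hv, mul_add]

lemma intervalAvg_sub (h : c ≤ d) (hu : IntegrableOn u (Ioc c d))
    (hv : IntegrableOn v (Ioc c d)) :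
    intervalAvg (fun x => u x - v x) c d = intervalAvg u c d - intervalAvg v c d := by
  rw [intervalAvg_eq_inv_mul h, intervalAvg_eq_inv_mul h, intervalAvg_eq_inv_mul h,
    integral_sub hu hv, mul_sub]

lemma intervalAvg_mono (h : c ≤ d) (hu : IntegrableOn u (Ioc c d)) (hv : IntegrableOn v (Ioc c d))
    (huv : ∀ x ∈ Ioc c d, u x ≤ v x) : intervalAvg u c d ≤ intervalAvg v c d := by
  rw [intervalAvg_eq_inv_mul h, intervalAvg_eq_inv_mul h]
  exact mul_le_mul_of_nonneg_left (setIntegral_mono_on hu hv measurableSet_Ioc huv)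
    (inv_nonneg.2 (sub_nonneg.2 h))

lemma intervalAvg_sub_intervalAvg_eq_zero (h : c < d) (hu : IntegrableOn u (Ioc c d)) :
    intervalAvg (fun x => u x - intervalAvg u c d) c d = 0 := by
  rw [intervalAvg_sub h.le hu (integrableOn_const measure_Ioc_lt_top.ne),
    intervalAvg_const h.ne, sub_self]

lemma integral_Ioc_sub_const (h : c < d) (hu : IntegrableOn u (Ioc c d)) (k : ℝ) :
    ∫ x in Ioc c d, (u x - k) = (d - c) * (intervalAvg u c d - k) := by
  rw [integral_Ioc_eq_mul_intervalAvg h, intervalAvg_sub h.le hu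
    (integrableOn_const measure_Ioc_lt_top.ne), intervalAvg_const h.ne]

end IntervalAvg

lemma MeasureTheory.LocallyIntegrable.integrableOn_Ioc {u : ℝ → ℝ}
    (hu : LocallyIntegrable u volume) (c d : ℝ) : IntegrableOn u (Ioc c d) :=
  (hu.integrableOn_isCompact isCompact_Icc).mono_set Ioc_subset_Icc_self

lemma integrableOn_exp_sub {s : Set ℝ} {u : ℝ → ℝ}
    (he : IntegrableOn (fun x => exp (u x)) s) (K : ℝ) :
    IntegrableOn (fun x => exp (u x - K)) s := by
  simp_rw [exp_sub]
  exact he.div_const (exp K)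

lemma integrableOn_sub_const {s : Set ℝ} {u : ℝ → ℝ} (hs : volume s ≠ ⊤)
    (hu : IntegrableOn u s) (K : ℝ) : IntegrableOn (fun x => u x - K) s :=
  hu.sub (integrableOn_const hs)

lemma one_le_intervalAvg_exp_sub {u : ℝ → ℝ} {c d : ℝ} (h : c < d)
    (hu : IntegrableOn u (Ioc c d)) (he : IntegrableOn (fun x => exp (u x)) (Ioc c d)) :
    1 ≤ intervalAvg (fun x => exp (u x - intervalAvg u c d)) c d := by
  have hv := integrableOn_sub_const measure_Ioc_lt_top.ne hu (intervalAvg u c d)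
  have h1 : IntegrableOn (fun _ => (1 : ℝ)) (Ioc c d) := integrableOn_const measure_Ioc_lt_top.ne
  calc 1 = intervalAvg (fun x => 1 + (u x - intervalAvg u c d)) c d := by
        rw [intervalAvg_add h.le h1 hv, intervalAvg_const h.ne,
          intervalAvg_sub_intervalAvg_eq_zero h hu, add_zero]
    _ ≤ _ := intervalAvg_mono h.le (h1.add hv) (integrableOn_exp_sub he _) fun x _ => by
        linarith [add_one_le_exp (u x - intervalAvg u c d)]

lemma abs_add_self_le {θ : ℝ} (hθ : 0 < θ) (s : ℝ) :
    |s| + s ≤ θ + 2 / θ * (exp s - 1 - s) := by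
  rcases le_or_gt s 0 with hs | hs
  · rw [abs_of_nonpos hs, neg_add_cancel]
    exact add_nonneg hθ.le (mul_nonneg (by positivity) (by linarith [add_one_le_exp s]))
  · rw [abs_of_pos hs]
    have hq : 2 / θ * (s ^ 2 / 2) ≤ 2 / θ * (exp s - 1 - s) := by
      gcongr
      linarith [quadratic_le_exp_of_nonneg hs.le]
    have hamgm : θ + s ^ 2 / θ - 2 * s = (θ - s) ^ 2 / θ := by field_simp; ring
    have : 0 ≤ (θ - s) ^ 2 / θ := by positivity
    have : 2 / θ * (s ^ 2 / 2) = s ^ 2 / θ := by ring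
    linarith

lemma meanOsc_le_of_intervalAvg_exp {u : ℝ → ℝ} {c d θ : ℝ} (h : c < d) (hθ : 0 < θ)
    (hu : IntegrableOn u (Ioc c d)) (he : IntegrableOn (fun x => exp (u x)) (Ioc c d)) :
    meanOsc u c d ≤
      θ + 2 * (intervalAvg (fun x => exp (u x - intervalAvg u c d)) c d - 1) / θ := by
  set A := intervalAvg u c d
  have hconst : IntegrableOn (fun _ => θ - 2 / θ) (Ioc c d) :=
    integrableOn_const measure_Ioc_lt_top.ne
  have hv := integrableOn_sub_const measure_Ioc_lt_top.ne hu A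
  have he' := (integrableOn_exp_sub he A).const_mul (2 / θ)
  have hv' := hv.const_mul (2 / θ + 1)
  have hw : IntegrableOn (fun x => 2 / θ * exp (u x - A) - (2 / θ + 1) * (u x - A)) (Ioc c d) :=
    he'.sub hv'
  calc meanOsc u c d = intervalAvg (fun x => |u x - A|) c d := rfl
    _ ≤ intervalAvg (fun x => θ - 2 / θ +
          (2 / θ * exp (u x - A) - (2 / θ + 1) * (u x - A))) c d :=
        intervalAvg_mono h.le hv.abs (hconst.add hw) fun x _ => by
          linarith [abs_add_self_le hθ (u x - A)]
    _ = θ + 2 * (intervalAvg (fun x => exp (u x - A)) c d - 1) / θ := by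
        rw [intervalAvg_add h.le hconst hw, intervalAvg_sub h.le he' hv',
          intervalAvg_const h.ne, intervalAvg_const_mul, intervalAvg_const_mul,
          intervalAvg_sub_intervalAvg_eq_zero h hu]
        ring

noncomputable def dyadicPt (a b : ℝ) (n i : ℕ) : ℝ := a + i * ((b - a) / 2 ^ n)

def dyadicIoc (a b : ℝ) (n i : ℕ) : Set ℝ := Ioc (dyadicPt a b n i) (dyadicPt a b n (i + 1))

section Dyadic

variable {a b : ℝ} {n i : ℕ}

lemma dyadicPt_succ_sub (a b : ℝ) (n i : ℕ) :
    dyadicPt a b n (i + 1) - dyadicPt a b n i = (b - a) / 2 ^ n := by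
  simp only [dyadicPt]; push_cast; ring

lemma dyadicPt_mono (hab : a ≤ b) (n : ℕ) : Monotone (dyadicPt a b n) := fun i j hij => by
  simp only [dyadicPt]
  have : 0 ≤ b - a := sub_nonneg.2 hab
  gcongr

lemma dyadicPt_lt_succ (hab : a < b) (n i : ℕ) : dyadicPt a b n i < dyadicPt a b n (i + 1) := by
  have := dyadicPt_succ_sub a b n i
  have : 0 < (b - a) / 2 ^ n := div_pos (sub_pos.2 hab) (by positivity)
  linarith

lemma dyadicPt_add_mul_two_pow (a b : ℝ) (k l j : ℕ) :
    dyadicPt a b (k + l) (j * 2 ^ l) = dyadicPt a b k j := by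
  simp only [dyadicPt, pow_add]; push_cast; field_simp

lemma dyadicIoc_zero_zero (a b : ℝ) : dyadicIoc a b 0 0 = Ioc a b := by
  simp [dyadicIoc, dyadicPt]

lemma dyadicIoc_subset_dyadicIoc_div (hab : a ≤ b) {k : ℕ} (hkn : k ≤ n) (i : ℕ) :
    dyadicIoc a b n i ⊆ dyadicIoc a b k (i / 2 ^ (n - k)) := by
  obtain ⟨l, rfl⟩ := Nat.exists_eq_add_of_le hkn
  rw [Nat.add_sub_cancel_left]
  have hl : i + 1 ≤ (i / 2 ^ l + 1) * 2 ^ l := by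
    rw [mul_comm]; exact Nat.lt_mul_div_succ i (by positivity)
  refine Ioc_subset_Ioc ?_ ?_
  · rw [← dyadicPt_add_mul_two_pow a b k l]
    exact dyadicPt_mono hab _ (Nat.div_mul_le_self i _)
  · rw [← dyadicPt_add_mul_two_pow a b k l]
    exact dyadicPt_mono hab _ hl

lemma dyadicIoc_subset (hab : a ≤ b) (hi : i < 2 ^ n) : dyadicIoc a b n i ⊆ Ioc a b := by
  simpa [Nat.div_eq_of_lt hi, dyadicIoc_zero_zero] using
    dyadicIoc_subset_dyadicIoc_div hab (Nat.zero_le n) i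

lemma disjoint_dyadicIoc (hab : a ≤ b) {j : ℕ} (hij : i ≠ j) :
    Disjoint (dyadicIoc a b n i) (dyadicIoc a b n j) := by
  rcases lt_or_gt_of_ne hij with h | h
  · exact Ioc_disjoint_Ioc_of_le (dyadicPt_mono hab n h)
  · exact (Ioc_disjoint_Ioc_of_le (dyadicPt_mono hab n h)).symm

lemma exists_mem_dyadicIoc (hab : a < b) {x : ℝ} (hx : x ∈ Ioc a b) (n : ℕ) :
    ∃ i < 2 ^ n, x ∈ dyadicIoc a b n i := by
  set h := (b - a) / 2 ^ n
  have hh : 0 < h := div_pos (sub_pos.2 hab) (by positivity)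
  set s := (x - a) / h
  have hs : 0 < s := div_pos (sub_pos.2 hx.1) hh
  have hs' : s ≤ 2 ^ n := by
    rw [div_le_iff₀ hh]
    have : 2 ^ n * h = b - a := mul_div_cancel₀ _ (by positivity)
    linarith [hx.2]
  obtain ⟨i, hi⟩ := Nat.exists_eq_add_of_lt (Nat.ceil_pos.2 hs)
  have hceil := Nat.ceil_lt_add_one hs.le
  have hle := Nat.le_ceil s
  rw [hi] at hceil hle
  push_cast at hceil hle
  refine ⟨i, ?_, ?_, ?_⟩
  · have : ⌈s⌉₊ ≤ 2 ^ n := Nat.ceil_le.2 (by exact_mod_cast hs')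
    omega
  · have : (i : ℝ) * h < x - a := by rw [← lt_div_iff₀ hh]; linarith
    simp only [dyadicPt]; linarith
  · have : x - a ≤ (i + 1 : ℝ) * h := by rw [← div_le_iff₀ hh]; linarith
    simp only [dyadicPt]; push_cast; linarith

end Dyadic

lemma ae_tendsto_intervalAvg {u : ℝ → ℝ} (hu : LocallyIntegrable u volume) :
    ∀ᵐ x, ∀ c d : ℕ → ℝ, (∀ n, c n < d n) → (∀ n, x ∈ Icc (c n) (d n)) →
      Tendsto (fun n => d n - c n) atTop (𝓝 0) →
      Tendsto (fun n => intervalAvg u (c n) (d n)) atTop (𝓝 (u x)) := by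
  filter_upwards [IsUnifLocDoublingMeasure.ae_tendsto_average volume hu 1]
    with x hx c d hcd hxcd hlen
  have hrad : Tendsto (fun n => (d n - c n) / 2) atTop (𝓝[>] 0) := by
    refine tendsto_nhdsWithin_iff.2 ⟨by simpa using hlen.div_const 2, ?_⟩
    exact Eventually.of_forall fun n => half_pos (sub_pos.2 (hcd n))
  refine (hx (fun n => (c n + d n) / 2) _ hrad (Eventually.of_forall fun n => ?_)).congr fun n => ?_
  · rw [one_mul, ← Real.Icc_eq_closedBall]; exact hxcd n
  · rw [← Real.Icc_eq_closedBall, setAverage_eq, Real.volume_real_Icc_of_le (hcd n).le,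
      integral_Icc_eq_integral_Ioc, smul_eq_mul, intervalAvg_eq_inv_mul (hcd n).le]

lemma intervalAvg_sub_intervalAvg_le {u : ℝ → ℝ} {c d c' d' : ℝ} (h : c < d) (h' : c' < d')
    (hsub : Ioc c d ⊆ Ioc c' d') (hu : IntegrableOn u (Ioc c' d')) :
    intervalAvg u c d - intervalAvg u c' d' ≤ (d' - c') / (d - c) * meanOsc u c' d' := by
  set K := intervalAvg u c' d'
  have hv := integrableOn_sub_const measure_Ioc_lt_top.ne hu K
  have habs : IntegrableOn (fun x => |u x - K|) (Ioc c' d') := hv.abs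
  have hJ : (d - c) * (intervalAvg u c d - K) ≤ (d' - c') * meanOsc u c' d' := calc
    (d - c) * (intervalAvg u c d - K) = ∫ x in Ioc c d, (u x - K) :=
        (integral_Ioc_sub_const h (hu.mono_set hsub) K).symm
    _ ≤ ∫ x in Ioc c d, |u x - K| :=
        setIntegral_mono_on (hv.mono_set hsub) (habs.mono_set hsub) measurableSet_Ioc
          fun x _ => le_abs_self _
    _ ≤ ∫ x in Ioc c' d', |u x - K| :=
        setIntegral_mono_set habs (Eventually.of_forall fun _ => abs_nonneg _)
          hsub.eventuallyLE
    _ = (d' - c') * meanOsc u c' d' := integral_Ioc_abs_sub_eq_mul_meanOsc h' u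
  rw [div_mul_eq_mul_div, le_div_iff₀ (sub_pos.2 h)]
  linarith

noncomputable def dyadicAvg (u : ℝ → ℝ) (a b : ℝ) (n i : ℕ) : ℝ :=
  intervalAvg u (dyadicPt a b n i) (dyadicPt a b n (i + 1))

/-- `(n, i)` is a maximal dyadic subinterval of `(a, b]` on which the average of `u` exceeds
`lam`; its ancestor at level `k ≤ n` is `(k, i / 2 ^ (n - k))`. -/
def IsStopped (u : ℝ → ℝ) (a b lam : ℝ) (p : ℕ × ℕ) : Prop :=
  p.2 < 2 ^ p.1 ∧ lam < dyadicAvg u a b p.1 p.2 ∧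
    ∀ k < p.1, dyadicAvg u a b k (p.2 / 2 ^ (p.1 - k)) ≤ lam

section Stopping

variable {u : ℝ → ℝ} {a b lam : ℝ}

lemma exists_isStopped_of_lt (hab : a ≤ b) {n i : ℕ} {x : ℝ} (hi : i < 2 ^ n)
    (hx : x ∈ dyadicIoc a b n i) (hlam : lam < dyadicAvg u a b n i) :
    ∃ p, IsStopped u a b lam p ∧ x ∈ dyadicIoc a b p.1 p.2 := by
  classical
  have hex : ∃ k, k ≤ n ∧ lam < dyadicAvg u a b k (i / 2 ^ (n - k)) :=
    ⟨n, le_rfl, by simpa using hlam⟩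
  obtain ⟨hkn, hk⟩ := Nat.find_spec hex
  refine ⟨(Nat.find hex, i / 2 ^ (n - Nat.find hex)), ⟨?_, hk, fun k hk' => ?_⟩,
    dyadicIoc_subset_dyadicIoc_div hab hkn i hx⟩
  · rwa [Nat.div_lt_iff_lt_mul (by positivity), ← pow_add, Nat.add_sub_cancel' hkn]
  · have hanc : i / 2 ^ (n - Nat.find hex) / 2 ^ (Nat.find hex - k) = i / 2 ^ (n - k) := by
      rw [Nat.div_div_eq_div_mul, ← pow_add]
      congr 2
      omega
    rw [hanc]
    exact not_lt.1 fun h => Nat.find_min hex hk' ⟨by omega, h⟩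

lemma IsStopped.disjoint (hab : a ≤ b) {p q : ℕ × ℕ} (hp : IsStopped u a b lam p)
    (hq : IsStopped u a b lam q) (hpq : p ≠ q) :
    Disjoint (dyadicIoc a b p.1 p.2) (dyadicIoc a b q.1 q.2) := by
  wlog hle : q.1 ≤ p.1 generalizing p q
  · exact (this hq hp hpq.symm (by omega)).symm
  by_cases hj : p.2 / 2 ^ (p.1 - q.1) = q.2
  · exfalso
    rcases hle.lt_or_eq with hlt | heq
    · have := hp.2.2 q.1 hlt
      rw [hj] at this
      exact (hq.2.1.trans_le this).false
    · rw [heq, Nat.sub_self, pow_zero, Nat.div_one] at hj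
      exact hpq (Prod.ext heq.symm hj)
  · exact (disjoint_dyadicIoc hab hj).mono_left (dyadicIoc_subset_dyadicIoc_div hab hle p.2)

lemma IsStopped.dyadicAvg_le (hab : a < b) (hu : IntegrableOn u (Ioc a b))
    (h0 : intervalAvg u a b ≤ lam) {η : ℝ}
    (hosc : ∀ c d, c < d → Ioc c d ⊆ Ioc a b → meanOsc u c d ≤ η) {p : ℕ × ℕ}
    (hp : IsStopped u a b lam p) : dyadicAvg u a b p.1 p.2 ≤ lam + 2 * η := by
  obtain ⟨_ | n, i⟩ := p <;> obtain ⟨hi, hlt, hanc⟩ := hp <;> dsimp only at hi hlt hanc ⊢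
  · obtain rfl : i = 0 := by simpa using hi
    have h00 : dyadicAvg u a b 0 0 = intervalAvg u a b := by simp [dyadicAvg, dyadicPt]
    linarith
  · have hpar := hanc n (Nat.lt_succ_self n)
    simp only [Nat.add_sub_cancel_left, pow_one] at hpar
    have hsub := dyadicIoc_subset_dyadicIoc_div hab.le (Nat.le_add_right n 1) i
    simp only [Nat.add_sub_cancel_left, pow_one] at hsub
    have hPsub := dyadicIoc_subset hab.le (i := i / 2) (n := n) (by omega)
    have hdiff := intervalAvg_sub_intervalAvg_le (dyadicPt_lt_succ hab _ _)
      (dyadicPt_lt_succ hab _ _) hsub (hu.mono_set hPsub)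
    have hratio : (dyadicPt a b n (i / 2 + 1) - dyadicPt a b n (i / 2)) /
        (dyadicPt a b (n + 1) (i + 1) - dyadicPt a b (n + 1) i) = 2 := by
      rw [dyadicPt_succ_sub, dyadicPt_succ_sub, pow_succ]
      field_simp [(sub_pos.2 hab).ne']
    rw [hratio] at hdiff
    have := hosc _ _ (dyadicPt_lt_succ hab _ _) hPsub
    unfold dyadicAvg at hpar ⊢
    linarith

end Stopping

noncomputable def truncExpAvg (u : ℝ → ℝ) (m c d : ℝ) : ℝ :=
  intervalAvg (fun x => min (exp (u x - intervalAvg u c d)) m) c d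

section Truncation

variable {u : ℝ → ℝ} {c d m : ℝ}

lemma integrableOn_min_exp_sub {s : Set ℝ} (hs : volume s ≠ ⊤)
    (he : IntegrableOn (fun x => exp (u x)) s) (K m : ℝ) :
    IntegrableOn (fun x => min (exp (u x - K)) m) s :=
  (integrableOn_exp_sub he K).inf (integrableOn_const hs)

lemma truncExpAvg_nonneg (hm : 0 ≤ m) (h : c ≤ d) : 0 ≤ truncExpAvg u m c d := by
  rw [truncExpAvg, intervalAvg_eq_inv_mul h]
  exact mul_nonneg (inv_nonneg.2 (sub_nonneg.2 h))
    (setIntegral_nonneg measurableSet_Ioc fun x _ => le_min (exp_pos _).le hm)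

lemma truncExpAvg_le (h : c < d) (he : IntegrableOn (fun x => exp (u x)) (Ioc c d)) :
    truncExpAvg u m c d ≤ m := by
  calc truncExpAvg u m c d ≤ intervalAvg (fun _ => m) c d :=
        intervalAvg_mono h.le (integrableOn_min_exp_sub measure_Ioc_lt_top.ne he _ _)
          (integrableOn_const measure_Ioc_lt_top.ne) fun x _ => min_le_right _ _
    _ = m := intervalAvg_const h.ne m

lemma min_mul_le_mul_min {α β m : ℝ} (hα : 1 ≤ α) (hm : 0 ≤ m) :
    min (α * β) m ≤ α * min β m := by
  rcases le_total β m with h | h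
  · rw [min_eq_left h]; exact min_le_left _ _
  · rw [min_eq_right h]; exact (min_le_right _ _).trans (le_mul_of_one_le_left hm hα)

lemma intervalAvg_min_exp_sub_le (h : c ≤ d) (he : IntegrableOn (fun x => exp (u x)) (Ioc c d))
    (hm : 0 ≤ m) {K : ℝ} (hK : K ≤ intervalAvg u c d) :
    intervalAvg (fun x => min (exp (u x - K)) m) c d ≤
      exp (intervalAvg u c d - K) * truncExpAvg u m c d := by
  rw [truncExpAvg, ← intervalAvg_const_mul]
  refine intervalAvg_mono h (integrableOn_min_exp_sub measure_Ioc_lt_top.ne he _ _)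
    ((integrableOn_min_exp_sub measure_Ioc_lt_top.ne he _ _).const_mul _) fun x _ => ?_
  rw [show u x - K = (intervalAvg u c d - K) + (u x - intervalAvg u c d) by ring, exp_add]
  exact min_mul_le_mul_min (one_le_exp (sub_nonneg.2 hK)) hm

lemma tendsto_truncExpAvg (h : c ≤ d) (he : IntegrableOn (fun x => exp (u x)) (Ioc c d)) :
    Tendsto (fun m : ℕ => truncExpAvg u m c d) atTop
      (𝓝 (intervalAvg (fun x => exp (u x - intervalAvg u c d)) c d)) := by
  simp only [truncExpAvg]
  set A := intervalAvg u c d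
  simp only [intervalAvg_eq_inv_mul h]
  refine (integral_tendsto_of_tendsto_of_monotone
    (fun m => integrableOn_min_exp_sub measure_Ioc_lt_top.ne he _ _)
    (integrableOn_exp_sub he _) (Eventually.of_forall fun x m m' hmm' => ?_)
    (Eventually.of_forall fun x => ?_)).const_mul _
  · exact min_le_min le_rfl (Nat.cast_le.2 hmm')
  · refine tendsto_const_nhds.congr' ?_
    filter_upwards [eventually_ge_atTop ⌈exp (u x - A)⌉₊] with m hm
    exact (min_eq_left ((Nat.le_ceil _).trans (Nat.cast_le.2 hm))).symm

end Truncation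

lemma setIntegral_iUnion_mono {X ι : Type*} [MeasurableSpace X] {μ : Measure X} [Countable ι]
    {s : ι → Set X} {f g : X → ℝ} (hs : ∀ i, MeasurableSet (s i))
    (hd : Pairwise (Function.onFun Disjoint s)) (hf : IntegrableOn f (⋃ i, s i) μ)
    (hg : IntegrableOn g (⋃ i, s i) μ)
    (h : ∀ i, ∫ x in s i, f x ∂μ ≤ ∫ x in s i, g x ∂μ) :
    ∫ x in ⋃ i, s i, f x ∂μ ≤ ∫ x in ⋃ i, s i, g x ∂μ :=
  hasSum_le h (hasSum_integral_iUnion hs hd hf) (hasSum_integral_iUnion hs hd hg)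

def stoppedUnion (u : ℝ → ℝ) (a b lam : ℝ) : Set ℝ :=
  ⋃ p : {p // IsStopped u a b lam p}, dyadicIoc a b p.1.1 p.1.2

section StoppedUnion

variable {u : ℝ → ℝ} {a b lam : ℝ}

lemma measurableSet_stoppedUnion (u : ℝ → ℝ) (a b lam : ℝ) :
    MeasurableSet (stoppedUnion u a b lam) :=
  MeasurableSet.iUnion fun _ => measurableSet_Ioc

lemma stoppedUnion_subset (hab : a ≤ b) : stoppedUnion u a b lam ⊆ Ioc a b :=
  iUnion_subset fun p => dyadicIoc_subset hab p.2.1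

lemma measure_stoppedUnion_ne_top (hab : a ≤ b) : volume (stoppedUnion u a b lam) ≠ ⊤ :=
  ((measure_mono (stoppedUnion_subset hab)).trans_lt measure_Ioc_lt_top).ne

lemma setIntegral_stoppedUnion_mono (hab : a ≤ b) {f g : ℝ → ℝ}
    (hf : IntegrableOn f (Ioc a b)) (hg : IntegrableOn g (Ioc a b))
    (h : ∀ p, IsStopped u a b lam p → ∫ x in dyadicIoc a b p.1 p.2, f x ≤
      ∫ x in dyadicIoc a b p.1 p.2, g x) :
    ∫ x in stoppedUnion u a b lam, f x ≤ ∫ x in stoppedUnion u a b lam, g x :=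
  setIntegral_iUnion_mono (fun _ => measurableSet_Ioc)
    (fun p q hpq => p.2.disjoint hab q.2 (Subtype.coe_injective.ne hpq))
    (hf.mono_set (stoppedUnion_subset hab)) (hg.mono_set (stoppedUnion_subset hab))
    fun p => h p.1 p.2

lemma ae_le_of_notMem_stoppedUnion (hab : a < b) (hu : LocallyIntegrable u volume) :
    ∀ᵐ x, x ∈ Ioc a b \ stoppedUnion u a b lam → u x ≤ lam := by
  filter_upwards [ae_tendsto_intervalAvg hu] with x hx ⟨hxI, hxU⟩
  choose i hi hxi using exists_mem_dyadicIoc hab hxI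
  have hgood (n : ℕ) : dyadicAvg u a b n (i n) ≤ lam := by
    by_contra! hbad
    obtain ⟨p, hp, hxp⟩ := exists_isStopped_of_lt hab.le (hi n) (hxi n) hbad
    exact hxU (mem_iUnion.2 ⟨⟨p, hp⟩, hxp⟩)
  refine le_of_tendsto' (hx _ _ (fun n => dyadicPt_lt_succ hab n (i n))
    (fun n => Ioc_subset_Icc_self (hxi n)) ?_) hgood
  simp_rw [dyadicPt_succ_sub]
  exact tendsto_const_nhds.div_atTop (tendsto_pow_atTop_atTop_of_one_lt one_lt_two)

lemma mul_measureReal_stoppedUnion_le (hab : a < b) (hu : IntegrableOn u (Ioc a b)) (t : ℝ) :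
    t * volume.real (stoppedUnion u a b (intervalAvg u a b + t)) ≤ (b - a) * meanOsc u a b := by
  set c₀ := intervalAvg u a b
  set U := stoppedUnion u a b (c₀ + t)
  have hUI : U ⊆ Ioc a b := stoppedUnion_subset hab.le
  have hv := integrableOn_sub_const measure_Ioc_lt_top.ne hu c₀
  have habs : IntegrableOn (fun x => |u x - c₀|) (Ioc a b) := hv.abs
  have hlam : ∫ x in U, (c₀ + t) ≤ ∫ x in U, u x := by
    refine setIntegral_stoppedUnion_mono hab.le (integrableOn_const measure_Ioc_lt_top.ne) hu
      fun p hp => ?_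
    have hJ := dyadicPt_lt_succ hab p.1 p.2
    rw [dyadicIoc, setIntegral_const, volume_real_Ioc_of_le hJ.le, smul_eq_mul,
      integral_Ioc_eq_mul_intervalAvg hJ]
    exact mul_le_mul_of_nonneg_left hp.2.1.le (sub_pos.2 hJ).le
  calc t * volume.real U ≤ ∫ x in U, (u x - c₀) := by
        rw [integral_sub (hu.mono_set hUI)
          (integrableOn_const (measure_stoppedUnion_ne_top hab.le)), setIntegral_const, smul_eq_mul]
        rw [setIntegral_const, smul_eq_mul] at hlam
        linarith
    _ ≤ ∫ x in Ioc a b, |u x - c₀| :=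
        (setIntegral_mono_on (hv.mono_set hUI) (habs.mono_set hUI)
          (measurableSet_stoppedUnion u a b _) fun x _ => le_abs_self _).trans
        (setIntegral_mono_set habs (Eventually.of_forall fun _ => abs_nonneg _) hUI.eventuallyLE)
    _ = (b - a) * meanOsc u a b := integral_Ioc_abs_sub_eq_mul_meanOsc hab u

lemma setIntegral_stoppedUnion_min_exp_sub_le (hab : a < b) (hu : IntegrableOn u (Ioc a b))
    (he : IntegrableOn (fun x => exp (u x)) (Ioc a b)) {t η m S : ℝ} (ht : 0 ≤ t)
    (hm : 0 ≤ m)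
    (hosc : ∀ c d, c < d → Ioc c d ⊆ Ioc a b → meanOsc u c d ≤ η)
    (hS : ∀ c d, c < d → Ioc c d ⊆ Ioc a b → truncExpAvg u m c d ≤ S) :
    ∫ x in stoppedUnion u a b (intervalAvg u a b + t), min (exp (u x - intervalAvg u a b)) m ≤
      volume.real (stoppedUnion u a b (intervalAvg u a b + t)) * (exp (t + 2 * η) * S) := by
  rw [← smul_eq_mul, ← setIntegral_const]
  refine setIntegral_stoppedUnion_mono hab.le
    (integrableOn_min_exp_sub measure_Ioc_lt_top.ne he _ _)
    (integrableOn_const measure_Ioc_lt_top.ne) fun p hp => ?_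
  have hJ := dyadicPt_lt_succ hab p.1 p.2
  have hJI := dyadicIoc_subset hab.le hp.1
  have hlt := hp.2.1
  have havg := hp.dyadicAvg_le hab hu (by linarith) hosc
  unfold dyadicAvg at hlt havg
  have hmin := intervalAvg_min_exp_sub_le hJ.le (he.mono_set hJI) hm
    (K := intervalAvg u a b) (by linarith)
  rw [dyadicIoc, setIntegral_const, volume_real_Ioc_of_le hJ.le, smul_eq_mul,
    integral_Ioc_eq_mul_intervalAvg hJ]
  refine mul_le_mul_of_nonneg_left (hmin.trans ?_) (sub_pos.2 hJ).le
  exact mul_le_mul (exp_le_exp.2 (by linarith)) (hS _ _ hJ hJI)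
    (truncExpAvg_nonneg hm hJ.le) (exp_pos _).le

end StoppedUnion

lemma exp_le_one_add_add_two_mul_abs {s : ℝ} (hs : s ≤ 1 / 2) : exp s ≤ 1 + s + 2 * |s| := by
  rcases le_or_gt s 0 with h | h
  · rw [abs_of_nonpos h]
    linarith [exp_le_one_iff.2 h]
  · rw [abs_of_pos h]
    have h1 : 0 < 1 - s := by linarith
    calc exp s ≤ 1 / (1 - s) := (exp_bound_div_one_sub_of_interval' h (by linarith)).le
      _ ≤ 1 + s + 2 * s := by rw [div_le_iff₀ h1]; nlinarith

lemma setIntegral_exp_sub_le_of_ae_le {u : ℝ → ℝ} {a b : ℝ} (hab : a < b)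
    (hu : IntegrableOn u (Ioc a b)) (he : IntegrableOn (fun x => exp (u x)) (Ioc a b))
    {V : Set ℝ} (hV : MeasurableSet V) (hVI : V ⊆ Ioc a b)
    (hle : ∀ᵐ x, x ∈ V → u x ≤ intervalAvg u a b + 1 / 2) :
    ∫ x in V, exp (u x - intervalAvg u a b) ≤ (b - a) * (1 + 2 * meanOsc u a b) := by
  set A := intervalAvg u a b
  have hv := integrableOn_sub_const measure_Ioc_lt_top.ne hu A
  have h1 : IntegrableOn (fun x => 1 + (u x - A)) (Ioc a b) :=
    (integrableOn_const measure_Ioc_lt_top.ne).add hv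
  have h2 : IntegrableOn (fun x => 2 * |u x - A|) (Ioc a b) := hv.abs.const_mul 2
  have hg := h1.add h2
  calc ∫ x in V, exp (u x - A) ≤ ∫ x in V, (1 + (u x - A) + 2 * |u x - A|) := by
        refine setIntegral_mono_on_ae ((integrableOn_exp_sub he A).mono_set hVI)
          (hg.mono_set hVI) hV ?_
        filter_upwards [hle] with x hx hxV
        exact exp_le_one_add_add_two_mul_abs (by linarith [hx hxV])
    _ ≤ ∫ x in Ioc a b, (1 + (u x - A) + 2 * |u x - A|) :=
        setIntegral_mono_set hg (Eventually.of_forall fun x => show 0 ≤ _ by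
          linarith [neg_abs_le (u x - A), abs_nonneg (u x - A)]) hVI.eventuallyLE
    _ = (b - a) * (1 + 2 * meanOsc u a b) := by
        rw [integral_Ioc_eq_mul_intervalAvg hab, intervalAvg_add hab.le h1 h2,
          intervalAvg_add hab.le (integrableOn_const measure_Ioc_lt_top.ne) hv,
          intervalAvg_const hab.ne, intervalAvg_sub_intervalAvg_eq_zero hab hu,
          intervalAvg_const_mul, add_zero]
        rfl

lemma truncExpAvg_le_of_forall_truncExpAvg_le {u : ℝ → ℝ} (hu : LocallyIntegrable u volume)
    (he : LocallyIntegrable (fun x => exp (u x)) volume) {t δ m S a b : ℝ} (ht : 0 < t)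
    (ht2 : t ≤ 1 / 2) (hm : 0 ≤ m) (hosc : ∀ c d, c < d → d - c < δ → meanOsc u c d ≤ t ^ 2)
    (hS : ∀ c d, c < d → d - c < δ → truncExpAvg u m c d ≤ S) (hab : a < b)
    (hlen : b - a < δ) :
    truncExpAvg u m a b ≤ 1 + 2 * t ^ 2 + exp (t + 2 * t ^ 2) * t * S := by
  set c₀ := intervalAvg u a b
  set U := stoppedUnion u a b (c₀ + t)
  have hI := hu.integrableOn_Ioc a b
  have heI := he.integrableOn_Ioc a b
  have hf := integrableOn_min_exp_sub measure_Ioc_lt_top.ne heI c₀ m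
  have hUmeas : MeasurableSet U := measurableSet_stoppedUnion u a b _
  have hshort {c d : ℝ} (h : c < d) (hcd : Ioc c d ⊆ Ioc a b) : d - c < δ := by
    rw [Ioc_subset_Ioc_iff h] at hcd
    linarith [hcd.1, hcd.2]
  have hoscI := hosc a b hab hlen
  have hS0 : 0 ≤ S := (truncExpAvg_nonneg hm hab.le).trans (hS a b hab hlen)
  have hvol : volume.real U ≤ t * (b - a) := by
    have := mul_measureReal_stoppedUnion_le hab hI t
    nlinarith
  have hUbound :
      ∫ x in U, min (exp (u x - c₀)) m ≤ volume.real U * (exp (t + 2 * t ^ 2) * S) :=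
    setIntegral_stoppedUnion_min_exp_sub_le hab hI heI ht.le hm
      (fun c d h hcd => hosc c d h (hshort h hcd)) (fun c d h hcd => hS c d h (hshort h hcd))
  have hVbound : ∫ x in Ioc a b \ U, min (exp (u x - c₀)) m ≤ (b - a) * (1 + 2 * t ^ 2) := by
    have hVmeas : MeasurableSet (Ioc a b \ U) := measurableSet_Ioc.diff hUmeas
    have hle : ∀ᵐ x, x ∈ Ioc a b \ U → u x ≤ c₀ + 1 / 2 := by
      filter_upwards [ae_le_of_notMem_stoppedUnion (lam := c₀ + t) hab hu] with x hx hxV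
      linarith [hx hxV]
    calc ∫ x in Ioc a b \ U, min (exp (u x - c₀)) m
        ≤ ∫ x in Ioc a b \ U, exp (u x - c₀) :=
          setIntegral_mono_on (hf.mono_set sdiff_subset)
            ((integrableOn_exp_sub heI c₀).mono_set sdiff_subset) hVmeas
            fun x _ => min_le_left _ _
      _ ≤ (b - a) * (1 + 2 * meanOsc u a b) :=
          setIntegral_exp_sub_le_of_ae_le hab hI heI hVmeas sdiff_subset hle
      _ ≤ (b - a) * (1 + 2 * t ^ 2) := by gcongr
  have hsplit := integral_inter_add_sdiff hUmeas hf
  rw [inter_eq_self_of_subset_right (stoppedUnion_subset hab.le),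
    integral_Ioc_eq_mul_intervalAvg hab] at hsplit
  have hCvol := mul_le_mul_of_nonneg_right hvol (by positivity : 0 ≤ exp (t + 2 * t ^ 2) * S)
  refine le_of_mul_le_mul_left ?_ (sub_pos.2 hab)
  rw [truncExpAvg]
  linarith

lemma le_one_add_four_mul_of_le {t S : ℝ} (ht : 0 < t) (ht8 : t ≤ 1 / 8)
    (hS : S ≤ 1 + 2 * t ^ 2 + exp (t + 2 * t ^ 2) * t * S) : S ≤ 1 + 4 * t := by
  have hexp : exp (t + 2 * t ^ 2) ≤ 2 := by
    have h1 : t + 2 * t ^ 2 < 1 / 2 := by nlinarith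
    have h2 := exp_bound_div_one_sub_of_interval' (by positivity) (h1.trans one_half_lt_one)
    have h3 : 1 / (1 - (t + 2 * t ^ 2)) ≤ 2 := by rw [div_le_iff₀ (by linarith)]; linarith
    linarith
  by_contra! h
  have : exp (t + 2 * t ^ 2) * t * S ≤ 2 * t * S := by
    gcongr
    linarith
  nlinarith

lemma truncExpAvg_le_one_add_four_mul {u : ℝ → ℝ} (hu : LocallyIntegrable u volume)
    (he : LocallyIntegrable (fun x => exp (u x)) volume) {t δ a b : ℝ} (ht : 0 < t)
    (ht8 : t ≤ 1 / 8) (hosc : ∀ c d, c < d → d - c < δ → meanOsc u c d ≤ t ^ 2)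
    (hab : a < b) (hlen : b - a < δ) (m : ℕ) : truncExpAvg u m a b ≤ 1 + 4 * t := by
  set T := {r | ∃ c d, c < d ∧ d - c < δ ∧ r = truncExpAvg u m c d}
  have hbdd : BddAbove T := ⟨m, by
    rintro _ ⟨c, d, hcd, -, rfl⟩
    exact truncExpAvg_le hcd (he.integrableOn_Ioc c d)⟩
  have hT (c d : ℝ) (hcd : c < d) (hlen : d - c < δ) : truncExpAvg u m c d ≤ sSup T :=
    le_csSup hbdd ⟨c, d, hcd, hlen, rfl⟩
  have hsup : sSup T ≤ 1 + 2 * t ^ 2 + exp (t + 2 * t ^ 2) * t * sSup T := by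
    refine csSup_le ⟨_, a, b, hab, hlen, rfl⟩ ?_
    rintro _ ⟨c, d, hcd, hlen, rfl⟩
    exact truncExpAvg_le_of_forall_truncExpAvg_le hu he ht (by linarith) m.cast_nonneg hosc hT
      hcd hlen
  exact (hT a b hab hlen).trans (le_one_add_four_mul_of_le ht ht8 hsup)

lemma intervalAvg_exp_sub_le_one_add_four_mul {u : ℝ → ℝ} (hu : LocallyIntegrable u volume)
    (he : LocallyIntegrable (fun x => exp (u x)) volume) {t δ a b : ℝ} (ht : 0 < t)
    (ht8 : t ≤ 1 / 8) (hosc : ∀ c d, c < d → d - c < δ → meanOsc u c d ≤ t ^ 2)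
    (hab : a < b) (hlen : b - a < δ) :
    intervalAvg (fun x => exp (u x - intervalAvg u a b)) a b ≤ 1 + 4 * t :=
  le_of_tendsto' (tendsto_truncExpAvg hab.le (he.integrableOn_Ioc a b))
    (truncExpAvg_le_one_add_four_mul hu he ht ht8 hosc hab hlen)

theorem log_vmo_iff_asymptotic_reverse_jensen_general (ω : ℝ → ℝ) (hω : ∀ x, 0 < ω x)
    (hloc : LocallyIntegrable ω volume)
    (hlogloc : LocallyIntegrable (fun x => Real.log (ω x)) volume) :
    (∀ ε > 0, ∃ δ > 0, ∀ a b : ℝ, a < b → b - a < δ →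
        meanOsc (fun x => Real.log (ω x)) a b < ε) ↔
    (∀ ε > 0, ∃ δ > 0, ∀ a b : ℝ, a < b → b - a < δ →
        |intervalAvg ω a b *
          Real.exp (-(intervalAvg (fun x => Real.log (ω x)) a b)) - 1| < ε) := by
  have hexp (x : ℝ) : exp (log (ω x)) = ω x := exp_log (hω x)
  have he : LocallyIntegrable (fun x => exp (log (ω x))) volume := by simpa only [hexp] using hloc
  have hR (a b : ℝ) : intervalAvg ω a b * exp (-intervalAvg (fun x => log (ω x)) a b) =
      intervalAvg (fun x => exp (log (ω x) - intervalAvg (fun x => log (ω x)) a b)) a b := by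
    simp only [← intervalAvg_mul_const, exp_sub, div_eq_mul_inv, ← exp_neg, hexp]
  simp only [hR]
  constructor
  · intro hvmo ε hε
    set t := min (ε / 5) (1 / 8)
    have ht : 0 < t := by positivity
    obtain ⟨δ, hδ, hosc⟩ := hvmo (t ^ 2) (by positivity)
    refine ⟨δ, hδ, fun a b hab hlen => abs_sub_lt_iff.2 ⟨?_, ?_⟩⟩
    · linarith [intervalAvg_exp_sub_le_one_add_four_mul hlogloc he ht (min_le_right _ _)
        (fun c d hcd hlen => (hosc c d hcd hlen).le) hab hlen, min_le_left (ε / 5) (1 / 8)]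
    · linarith [one_le_intervalAvg_exp_sub hab (hlogloc.integrableOn_Ioc a b)
        (he.integrableOn_Ioc a b)]
  · intro hrj ε hε
    obtain ⟨δ, hδ, hclose⟩ := hrj (ε ^ 2 / 9) (by positivity)
    refine ⟨δ, hδ, fun a b hab hlen => ?_⟩
    have hgap := (abs_lt.1 (hclose a b hab hlen)).2
    calc meanOsc (fun x => log (ω x)) a b
        ≤ ε / 3 + 2 * (intervalAvg (fun x => exp (log (ω x) -
            intervalAvg (fun x => log (ω x)) a b)) a b - 1) / (ε / 3) :=
          meanOsc_le_of_intervalAvg_exp hab (by positivity) (hlogloc.integrableOn_Ioc a b)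
            (he.integrableOn_Ioc a b)
      _ < ε / 3 + 2 * (ε ^ 2 / 9) / (ε / 3) := by gcongr
      _ = ε := by field_simp; norm_num

/-- (Mitsis) Let `ω` be a weight on `ℝ` with `log ω ∈ BMO(ℝ)`. Then `log ω ∈ VMO(ℝ)` if and
only if `lim_{δ→0} sup_{|I|<δ} ((1/|I|)∫_I ω) exp(-(1/|I|)∫_I log ω) = 1` over bounded
intervals `I ⊂ ℝ` (the asymptotic reverse Jensen inequality). -/
theorem log_vmo_iff_asymptotic_reverse_jensen (ω : ℝ → ℝ) (hω : ∀ x, 0 < ω x)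
    (hloc : LocallyIntegrable ω volume)
    (hlogloc : LocallyIntegrable (fun x => Real.log (ω x)) volume)
    (hBMO : ∃ M : ℝ, ∀ a b : ℝ, a < b → meanOsc (fun x => Real.log (ω x)) a b ≤ M) :
    (∀ ε > 0, ∃ δ > 0, ∀ a b : ℝ, a < b → b - a < δ →
        meanOsc (fun x => Real.log (ω x)) a b < ε) ↔
    (∀ ε > 0, ∃ δ > 0, ∀ a b : ℝ, a < b → b - a < δ →
        |intervalAvg ω a b *
          Real.exp (-(intervalAvg (fun x => Real.log (ω x)) a b)) - 1| < ε) :=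
  log_vmo_iff_asymptotic_reverse_jensen_general ω hω hloc hlogloc
end

section
/- Let ω be a weight on ℝ and suppose ε ∈ (0, 1/10) and δ > 0 are such that (1+ε)^{−1} ≤ ω(x₀, x₀+t)/ω(x₀−t, x₀) ≤ 1+ε for all x₀ ∈ ℝ, t ∈ (0,δ). Then for any x, y with 0 < y < δ: ∫_{x−y}^{x+y} ω(u+y/2)/ω(u, u+y/2) du ≤ (1+ε)² · ((1+ε)⁴ − 1)/ε, and in particular this integral is < 8. -/
open MeasureTheory intervalIntegral

/-- The mass `ω(a,b) = ∫_a^b ω` of the weight `ω` on the interval `(a,b)`. -/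
noncomputable def wMass (ω : ℝ → ℝ) (a b : ℝ) : ℝ := ∫ x in a..b, ω x

private lemma wkey (M : ℝ → ℝ → ℝ) (q y w u : ℝ) (hq : 1 ≤ q) (hy : 0 < y)
    (hadd : ∀ a b c : ℝ, M a b + M b c = M a c)
    (hnn : ∀ a b : ℝ, a ≤ b → 0 ≤ M a b)
    (hR : ∀ x₀ t : ℝ, 0 < t → t ≤ y → M x₀ (x₀ + t) ≤ q * M (x₀ - t) x₀)
    (hL : ∀ x₀ t : ℝ, 0 < t → t ≤ y → M (x₀ - t) x₀ ≤ q * M x₀ (x₀ + t))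
    (hu1 : w - y/2 ≤ u) (hu2 : u ≤ w + 3*y/2) :
    M w (w + 2*y) ≤ q * (1+q)^2 * M u (u + y/2) := by
  have hq0 : (0:ℝ) ≤ q := by linarith
  have hzero : ∀ a : ℝ, M a a = 0 := fun a => by have := hadd a a a; linarith
  have hm0 : 0 ≤ M u (u + y/2) := hnn _ _ (by linarith)
  have hprod : 0 ≤ (q - 1) * (1+q)^2 * M u (u + y/2) :=
    mul_nonneg (mul_nonneg (by linarith) (sq_nonneg _)) hm0
  have hH : M w (w+y) + M (w+y) (w+2*y) = M w (w+2*y) := hadd _ _ _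
  have hH2 : M (w+y) (w+2*y) ≤ q * M w (w+y) := by
    have h := hR (w+y) y hy le_rfl
    rw [show w + y + y = w + 2*y by ring, show w + y - y = w by ring] at h
    exact h
  have hH1 : M w (w+y) ≤ q * M (w+y) (w+2*y) := by
    have h := hL (w+y) y hy le_rfl
    rw [show w + y + y = w + 2*y by ring, show w + y - y = w by ring] at h
    exact h
  rcases lt_or_ge u w with hA' | hge
  · -- Case A' : u < w
    have e1 : M w (u + y/2) + M (u + y/2) (w + y) = M w (w + y) := hadd _ _ _
    have e2 : M u w + M w (u + y/2) = M u (u + y/2) := hadd _ _ _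
    have h3 : M (u + y/2) (w + y) ≤ q * M (2*u - w) (u + y/2) := by
      have h := hR (u + y/2) (w + y/2 - u) (by linarith) (by linarith)
      rw [show u + y/2 + (w + y/2 - u) = w + y by ring,
          show u + y/2 - (w + y/2 - u) = 2*u - w by ring] at h
      exact h
    have e3 : M (2*u - w) u + M u (u + y/2) = M (2*u - w) (u + y/2) := hadd _ _ _
    have h4 : M (2*u - w) u ≤ q * M u w := by
      have h := hL u (w - u) (by linarith) (by linarith)
      rw [show u - (w - u) = 2*u - w by ring, show u + (w - u) = w by ring] at h
      exact h
    have hw2 : 0 ≤ M w (u + y/2) := hnn _ _ (by linarith)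
    have qe3 : q * M (2*u - w) u + q * M u (u + y/2) = q * M (2*u - w) (u + y/2) := by
      rw [← mul_add, e3]
    have p4 : q * M (2*u - w) u ≤ q * (q * M u w) := mul_le_mul_of_nonneg_left h4 hq0
    have qe2 : q * (q * M u w) + q * (q * M w (u + y/2)) = q * (q * M u (u + y/2)) := by
      rw [← mul_add, ← mul_add, e2]
    have hqq : (0:ℝ) ≤ q*q - 1 := by nlinarith
    have hq2 : 0 ≤ (q*q - 1) * M w (u + y/2) := mul_nonneg hqq hw2
    have hH1b : M w (w + y) ≤ q * M u (u + y/2) + q * (q * M u (u + y/2)) := by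
      linarith
    have pfin := mul_le_mul_of_nonneg_left hH1b (by linarith : (0:ℝ) ≤ 1 + q)
    linarith [pfin, hH, hH2]
  · rcases le_or_gt u (w + y/2) with hA | hmid
    · -- Case A : w ≤ u ≤ w + y/2
      have e1 : M w u + M u (u + y/2) = M w (u + y/2) := hadd _ _ _
      have e2 : M w (u + y/2) + M (u + y/2) (w + y) = M w (w + y) := hadd _ _ _
      have e3 : M u (2*u - w) + M (2*u - w) (u + y/2) = M u (u + y/2) := hadd _ _ _
      have h1 : M w u ≤ q * M u (2*u - w) := by
        rcases eq_or_lt_of_le hge with heq | hlt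
        · rw [← heq, show 2*w - w = w by ring, hzero]
          simp [hzero]
        · have h := hL u (u - w) (by linarith) (by linarith)
          rw [show u - (u - w) = w by ring, show u + (u - w) = 2*u - w by ring] at h
          exact h
      have h2 : M (u + y/2) (w + y) ≤ q * M (2*u - w) (u + y/2) := by
        rcases eq_or_lt_of_le hA with heq | hlt
        · rw [heq, show w + y/2 + y/2 = w + y by ring,
              show 2*(w + y/2) - w = w + y by ring]
          simp [hzero]
        · have h := hR (u + y/2) (w + y/2 - u) (by linarith) (by linarith)
          rw [show u + y/2 + (w + y/2 - u) = w + y by ring,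
              show u + y/2 - (w + y/2 - u) = 2*u - w by ring] at h
          exact h
      have qe3 : q * M u (2*u - w) + q * M (2*u - w) (u + y/2) = q * M u (u + y/2) := by
        rw [← mul_add, e3]
      have hH1b : M w (w + y) ≤ (1 + q) * M u (u + y/2) := by linarith
      have pfin := mul_le_mul_of_nonneg_left hH1b (by linarith : (0:ℝ) ≤ 1 + q)
      linarith [pfin, hH, hH2, hprod]
    · rcases lt_or_ge u (w + y) with hC | hB
      · -- Case C : w + y/2 < u < w + y
        have g1 : M w u + M u (u + y/2) = M w (u + y/2) := hadd _ _ _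
        have g2 : M w (u + y/2) + M (u + y/2) (w + 2*y) = M w (w + 2*y) := hadd _ _ _
        have g3 : M u (u + y/2) + M (u + y/2) (2*u - w) = M u (2*u - w) := hadd _ _ _
        have g4 : M (2*u - w - y) u + M u (u + y/2) = M (2*u - w - y) (u + y/2) := hadd _ _ _
        have g5 : M u (w + y) + M (w + y) (u + y/2) = M u (u + y/2) := hadd _ _ _
        have h1 : M w u ≤ q * M u (2*u - w) := by
          have h := hL u (u - w) (by linarith) (by linarith)
          rw [show u - (u - w) = w by ring, show u + (u - w) = 2*u - w by ring] at h
          exact h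
        have h2 : M (u + y/2) (2*u - w) ≤ q * M (w + y) (u + y/2) := by
          have h := hR (u + y/2) (u - w - y/2) (by linarith) (by linarith)
          rw [show u + y/2 + (u - w - y/2) = 2*u - w by ring,
              show u + y/2 - (u - w - y/2) = w + y by ring] at h
          exact h
        have h3 : M (u + y/2) (w + 2*y) ≤ q * M (2*u - w - y) (u + y/2) := by
          have h := hR (u + y/2) (w + 3*y/2 - u) (by linarith) (by linarith)
          rw [show u + y/2 + (w + 3*y/2 - u) = w + 2*y by ring,
              show u + y/2 - (w + 3*y/2 - u) = 2*u - w - y by ring] at h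
          exact h
        have h4 : M (2*u - w - y) u ≤ q * M u (w + y) := by
          have h := hL u (w + y - u) (by linarith) (by linarith)
          rw [show u - (w + y - u) = 2*u - w - y by ring,
              show u + (w + y - u) = w + y by ring] at h
          exact h
        have p2 := mul_le_mul_of_nonneg_left h2 hq0
        have p4 := mul_le_mul_of_nonneg_left h4 hq0
        have qg3 : q * M u (u + y/2) + q * M (u + y/2) (2*u - w) = q * M u (2*u - w) := by
          rw [← mul_add, g3]
        have qg4 : q * M (2*u - w - y) u + q * M u (u + y/2)
            = q * M (2*u - w - y) (u + y/2) := by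
          rw [← mul_add, g4]
        have qg5 : q * (q * M u (w + y)) + q * (q * M (w + y) (u + y/2))
            = q * (q * M u (u + y/2)) := by
          rw [← mul_add, ← mul_add, g5]
        linarith [g1, g2, h1, h3, p2, p4, qg3, qg4, qg5, hprod]
      · -- Case B : w + y ≤ u ≤ w + 3y/2
        have e1 : M (w+y) u + M u (u + y/2) = M (w+y) (u + y/2) := hadd _ _ _
        have e2 : M (w+y) (u + y/2) + M (u + y/2) (w + 2*y) = M (w+y) (w + 2*y) := hadd _ _ _
        have e3 : M u (2*u - w - y) + M (2*u - w - y) (u + y/2) = M u (u + y/2) := hadd _ _ _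
        have h1 : M (w+y) u ≤ q * M u (2*u - w - y) := by
          rcases eq_or_lt_of_le hB with heq | hlt
          · rw [← heq, show 2*(w+y) - w - y = w + y by ring]
            simp [hzero]
          · have h := hL u (u - w - y) (by linarith) (by linarith)
            rw [show u - (u - w - y) = w + y by ring,
                show u + (u - w - y) = 2*u - w - y by ring] at h
            exact h
        have h2 : M (u + y/2) (w + 2*y) ≤ q * M (2*u - w - y) (u + y/2) := by
          rcases eq_or_lt_of_le hu2 with heq | hlt
          · rw [heq, show w + 3*y/2 + y/2 = w + 2*y by ring,
                show 2*(w + 3*y/2) - w - y = w + 2*y by ring]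
            simp [hzero]
          · have h := hR (u + y/2) (w + 3*y/2 - u) (by linarith) (by linarith)
            rw [show u + y/2 + (w + 3*y/2 - u) = w + 2*y by ring,
                show u + y/2 - (w + 3*y/2 - u) = 2*u - w - y by ring] at h
            exact h
        have qe3 : q * M u (2*u - w - y) + q * M (2*u - w - y) (u + y/2)
            = q * M u (u + y/2) := by
          rw [← mul_add, e3]
        have hH2b : M (w+y) (w + 2*y) ≤ (1 + q) * M u (u + y/2) := by linarith
        have pfin := mul_le_mul_of_nonneg_left hH2b (by linarith : (0:ℝ) ≤ 1 + q)
        linarith [pfin, hH, hH1, hprod]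

/-- If adjacent intervals of equal length `< δ` have mass ratio within `[(1+ε)⁻¹, 1+ε]` with
`ε ∈ (0, 1/10)`, then for `0 < y < δ`,
`∫_{x-y}^{x+y} ω(u+y/2)/ω(u, u+y/2) du ≤ (1+ε)²((1+ε)⁴-1)/ε`, and this bound is `< 8`. -/
theorem integral_density_ratio_le (ω : ℝ → ℝ) (ε δ : ℝ) (hε : 0 < ε) (hε' : ε < 1 / 10)
    (hδ : 0 < δ)
    (hω : ∀ x, 0 ≤ ω x) (hloc : LocallyIntegrable ω volume)
    (hpos : ∀ a b : ℝ, a < b → 0 < wMass ω a b)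
    (hdbl : ∀ x₀ t : ℝ, 0 < t → t < δ →
      (1 + ε)⁻¹ ≤ wMass ω x₀ (x₀ + t) / wMass ω (x₀ - t) x₀ ∧
        wMass ω x₀ (x₀ + t) / wMass ω (x₀ - t) x₀ ≤ 1 + ε) :
    ∀ x y : ℝ, 0 < y → y < δ →
      (∫ u in (x - y)..(x + y), ω (u + y / 2) / wMass ω u (u + y / 2))
          ≤ (1 + ε) ^ 2 * ((1 + ε) ^ 4 - 1) / ε ∧
        (∫ u in (x - y)..(x + y), ω (u + y / 2) / wMass ω u (u + y / 2)) < 8 := by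
  intro x y hy hyd
  have hq0 : (0:ℝ) < 1 + ε := by linarith
  have hInt : ∀ a b : ℝ, IntervalIntegrable ω volume a b := fun a b =>
    (hloc.integrableOn_isCompact isCompact_uIcc).intervalIntegrable
  have haddM : ∀ a b c : ℝ, wMass ω a b + wMass ω b c = wMass ω a c := fun a b c =>
    intervalIntegral.integral_add_adjacent_intervals (hInt a b) (hInt b c)
  have hnnM : ∀ a b : ℝ, a ≤ b → 0 ≤ wMass ω a b := fun a b hab =>
    intervalIntegral.integral_nonneg hab fun u _ => hω u
  have hRM : ∀ x₀ t : ℝ, 0 < t → t ≤ y →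
      wMass ω x₀ (x₀ + t) ≤ (1 + ε) * wMass ω (x₀ - t) x₀ := by
    intro x₀ t ht hty
    have hp := hpos (x₀ - t) x₀ (by linarith)
    have h := (hdbl x₀ t ht (lt_of_le_of_lt hty hyd)).2
    rw [div_le_iff₀ hp] at h
    linarith
  have hLM : ∀ x₀ t : ℝ, 0 < t → t ≤ y →
      wMass ω (x₀ - t) x₀ ≤ (1 + ε) * wMass ω x₀ (x₀ + t) := by
    intro x₀ t ht hty
    have hp := hpos (x₀ - t) x₀ (by linarith)
    have h := (hdbl x₀ t ht (lt_of_le_of_lt hty hyd)).1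
    rw [le_div_iff₀ hp] at h
    have h2 := mul_le_mul_of_nonneg_left h hq0.le
    rw [← mul_assoc, mul_inv_cancel₀ (ne_of_gt hq0), one_mul] at h2
    exact h2
  set K : ℝ := (1 + ε) * (1 + (1 + ε))^2 with hK
  set N : ℝ := wMass ω (x - y/2) (x - y/2 + 2*y) with hN
  have hNpos : 0 < N := hpos _ _ (by linarith)
  have key : ∀ u : ℝ, x - y ≤ u → u ≤ x + y → N ≤ K * wMass ω u (u + y/2) := by
    intro u h1 h2
    have h := wkey (wMass ω) (1 + ε) y (x - y/2) u (by linarith) hy haddM hnnM hRM hLM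
      (by linarith) (by linarith)
    rw [hN, hK]
    linarith [h]
  have hpt : ∀ u ∈ Set.Icc (x - y) (x + y),
      ω (u + y / 2) / wMass ω u (u + y / 2) ≤ K / N * ω (u + y / 2) := by
    intro u hu
    have hmu : 0 < wMass ω u (u + y / 2) := hpos _ _ (by linarith)
    have hk := key u hu.1 hu.2
    rw [div_le_iff₀ hmu, div_mul_eq_mul_div, div_mul_eq_mul_div, le_div_iff₀ hNpos]
    have h2 := mul_le_mul_of_nonneg_left hk (hω (u + y / 2))
    nlinarith [h2]
  have hint1 : IntervalIntegrable (fun u => ω (u + y / 2)) volume (x - y) (x + y) := by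
    have h := (hInt (x - y/2) (x - y/2 + 2*y)).comp_add_right (y / 2)
    rw [show x - y/2 - y / 2 = x - y by ring,
        show x - y/2 + 2*y - y / 2 = x + y by ring] at h
    exact h
  have hFcont : Continuous fun z : ℝ => ∫ t in (0:ℝ)..z, ω t :=
    intervalIntegral.continuous_primitive (fun a b => hInt a b) 0
  have hmcont : Continuous fun u : ℝ => wMass ω u (u + y / 2) := by
    have hrep : (fun u : ℝ => wMass ω u (u + y / 2))
        = fun u => (∫ t in (0:ℝ)..(u + y / 2), ω t) - ∫ t in (0:ℝ)..u, ω t := by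
      funext u
      have h := haddM 0 u (u + y / 2)
      simp only [wMass] at h ⊢
      linarith
    rw [hrep]
    exact (hFcont.comp (continuous_id.add continuous_const)).sub hFcont
  have hintf : IntervalIntegrable (fun u => ω (u + y / 2) / wMass ω u (u + y / 2))
      volume (x - y) (x + y) := by
    simp only [div_eq_mul_inv]
    apply hint1.mul_continuousOn
    exact (hmcont.inv₀ fun u => (hpos u (u + y / 2) (by linarith)).ne').continuousOn
  have hintg : IntervalIntegrable (fun u => K / N * ω (u + y / 2)) volume (x - y) (x + y) :=
    hint1.const_mul _
  have hmono := intervalIntegral.integral_mono_on (by linarith : x - y ≤ x + y)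
    hintf hintg hpt
  have hgval : (∫ u in (x - y)..(x + y), K / N * ω (u + y / 2)) = K := by
    rw [intervalIntegral.integral_const_mul]
    have h1 : (∫ u in (x - y)..(x + y), ω (u + y / 2)) = N := by
      rw [intervalIntegral.integral_comp_add_right (fun t => ω t) (y / 2), hN]
      rw [show x - y + y / 2 = x - y/2 by ring, show x + y + y / 2 = x - y/2 + 2*y by ring]
      rfl
    rw [h1, div_mul_cancel₀ _ (ne_of_gt hNpos)]
  rw [hgval] at hmono
  have hK1 : K ≤ (1 + ε) ^ 2 * ((1 + ε) ^ 4 - 1) / ε := by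
    rw [hK, le_div_iff₀ hε]
    nlinarith [pow_nonneg hε.le 2, pow_nonneg hε.le 3, pow_nonneg hε.le 4,
      pow_nonneg hε.le 5, pow_nonneg hε.le 6]
  have hK8 : K < 8 := by
    rw [hK]
    nlinarith [mul_le_mul_of_nonneg_right hε'.le hε.le, hε, hε',
      mul_nonneg (mul_nonneg hε.le hε.le) hε.le]
  exact ⟨hmono.trans hK1, lt_of_le_of_lt hmono hK8⟩
end
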